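/- arXiv:0802.0536 — 2 statements merged into one kernel-verified Lean document; each statement's English description precedes it below -/
import Mathlib

section
/- For every real number v, the quantity λ(v)·(λ(v) − v) lies strictly between 0 and 1, i.e. 0 < λ(v)² − v·λ(v) < 1. -/
open MeasureTheory ProbabilityTheory Real Filter Set

noncomputable section

/-- The standard normal density `φ`. -/
def gPDF (t : ℝ) : ℝ := (Real.sqrt (2 * Real.pi))⁻¹ * Real.exp (-t ^ 2 / 2)

/-- The standard normal cumulative distribution function `Φ`. -/
def gCDF (t : ℝ) : ℝ := ∫ s in Set.Iic t, gPDF s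

/-- The inverse Mills ratio `λ(v) = φ(v)/(1 - Φ(v))`. -/
def mills (v : ℝ) : ℝ := gPDF v / (1 - gCDF v)

/-- Euclidean norm of a vector in `ℝ^n`. -/
def vnorm {n : ℕ} (x : Fin n → ℝ) : ℝ := Real.sqrt (∑ i, (x i) ^ 2)

/-- Frobenius (Euclidean) norm of a real matrix. -/
def frob {m n : Type*} [Fintype m] [Fintype n] (M : Matrix m n ℝ) : ℝ :=
  Real.sqrt (∑ i, ∑ j, (M i j) ^ 2)

/-- Dot product `xᵀδ`. -/
def dotp {n : ℕ} (x δ : Fin n → ℝ) : ℝ := ∑ i, x i * δ i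

/-- The block matrix `[[x xᵀ, -y·x], [-y·xᵀ, γ⁻² + y²]]`. -/
def blockA (K : ℕ) (x : Fin K → ℝ) (y γ : ℝ) :
    Matrix (Fin K ⊕ Unit) (Fin K ⊕ Unit) ℝ :=
  Matrix.fromBlocks (Matrix.vecMulVec x x) (Matrix.of fun i _ => -(y * x i))
    (Matrix.of fun _ j => -(y * x j)) (Matrix.of fun _ _ => γ⁻¹ ^ 2 + y ^ 2)

/-- The block matrix `[[x xᵀ, -c·x], [-c·xᵀ, c²]]`. -/
def blockB (K : ℕ) (x : Fin K → ℝ) (c : ℝ) :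
    Matrix (Fin K ⊕ Unit) (Fin K ⊕ Unit) ℝ :=
  Matrix.fromBlocks (Matrix.vecMulVec x x) (Matrix.of fun i _ => -(c * x i))
    (Matrix.of fun _ j => -(c * x j)) (Matrix.of fun _ _ => c ^ 2)

/-- The Hessian of the reparameterized log conditional likelihood of the truncated
regression model, `H(y, x; δ, γ)` with `v = γc - xᵀδ`. -/
def truncHess (K : ℕ) (c y : ℝ) (x δ : Fin K → ℝ) (γ : ℝ) :
    Matrix (Fin K ⊕ Unit) (Fin K ⊕ Unit) ℝ :=
  -(blockA K x y γ) +
    (mills (γ * c - dotp x δ) * (mills (γ * c - dotp x δ) - (γ * c - dotp x δ))) • blockB K x c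

/-- The Hessian of the reparameterized log conditional likelihood of the Tobit model,
`H(y, x, d; δ, γ)` with `v = γc - xᵀδ`. -/
def tobitHess (K : ℕ) (c y : ℝ) (x : Fin K → ℝ) (d : ℝ) (δ : Fin K → ℝ) (γ : ℝ) :
    Matrix (Fin K ⊕ Unit) (Fin K ⊕ Unit) ℝ :=
  -((1 - d) • blockA K x y γ) -
    (d * mills (-(γ * c - dotp x δ)) * (mills (-(γ * c - dotp x δ)) + (γ * c - dotp x δ))) •
      blockB K x c

/-- The score of the reparameterized log conditional likelihood of the Tobit model,
`s(y, x, d; δ, γ)` with `v = γc - xᵀδ`. -/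
def tobitScore (K : ℕ) (c y : ℝ) (x : Fin K → ℝ) (d : ℝ) (δ : Fin K → ℝ) (γ : ℝ) :
    Fin K ⊕ Unit → ℝ := fun j =>
  (1 - d) *
      Sum.elim (fun i => (γ * y - dotp x δ) * x i) (fun _ => 1 / γ - (γ * y - dotp x δ) * y) j
    + d * mills (-(γ * c - dotp x δ)) * Sum.elim (fun i => -x i) (fun _ => c) j


section MillsAux
open Topology

lemma gPDF_eq (t : ℝ) : gPDF t = (Real.sqrt (2 * Real.pi))⁻¹ * Real.exp (-(1/2) * t ^ 2) := by
  rw [gPDF]; congr 1; ring_nf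

lemma sqrt2pi_pos : 0 < Real.sqrt (2 * Real.pi) :=
  Real.sqrt_pos.mpr (by positivity)

lemma gPDF_pos (t : ℝ) : 0 < gPDF t := by
  rw [gPDF]; positivity

lemma integrable_gPDF : Integrable gPDF := by
  have h := (integrable_exp_neg_mul_sq (by norm_num : (0:ℝ) < 1/2)).const_mul
    ((Real.sqrt (2 * Real.pi))⁻¹)
  refine h.congr (Eventually.of_forall fun t => ?_)
  rw [gPDF_eq]

lemma integrable_id_gPDF : Integrable (fun t : ℝ => t * gPDF t) := by
  have h := (integrable_mul_exp_neg_mul_sq (by norm_num : (0:ℝ) < 1/2)).const_mul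
    ((Real.sqrt (2 * Real.pi))⁻¹)
  refine h.congr (Eventually.of_forall fun t => ?_)
  simp only [gPDF_eq]; ring

lemma integrable_sq_gPDF : Integrable (fun t : ℝ => t ^ 2 * gPDF t) := by
  have h := (integrable_rpow_mul_exp_neg_mul_sq (by norm_num : (0:ℝ) < 1/2)
    (by norm_num : (-1:ℝ) < 2)).const_mul ((Real.sqrt (2 * Real.pi))⁻¹)
  refine h.congr (Eventually.of_forall fun t => ?_)
  simp only [gPDF_eq]
  rw [show ((2:ℝ)) = ((2:ℕ):ℝ) by norm_num, Real.rpow_natCast]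
  ring

lemma integral_gPDF : ∫ t, gPDF t = 1 := by
  have h : ∫ t : ℝ, Real.exp (-(1/2) * t ^ 2) = Real.sqrt (Real.pi / (1/2)) :=
    integral_gaussian (1/2)
  have h2 : Real.pi / (1/2) = 2 * Real.pi := by ring
  simp_rw [gPDF_eq, integral_const_mul, h, h2, inv_mul_cancel₀ sqrt2pi_pos.ne']

lemma hasDerivAt_exp_part (t : ℝ) :
    HasDerivAt (fun t : ℝ => Real.exp (-t ^ 2 / 2)) (-t * Real.exp (-t ^ 2 / 2)) t := by
  have h1 : HasDerivAt (fun t : ℝ => -t ^ 2 / 2) (-t) t := by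
    have := ((hasDerivAt_pow 2 t).neg.div_const 2)
    refine this.congr_deriv ?_
    push_cast; ring
  simpa [mul_comm] using h1.exp

lemma hasDerivAt_neg_gPDF (t : ℝ) :
    HasDerivAt (fun t : ℝ => -gPDF t) (t * gPDF t) t := by
  have h := ((hasDerivAt_exp_part t).const_mul ((Real.sqrt (2 * Real.pi))⁻¹)).neg
  simp only [gPDF]
  refine h.congr_deriv ?_
  ring

lemma tendsto_gPDF_atTop : Tendsto gPDF atTop (𝓝 0) := by
  have h0 : Tendsto (fun t : ℝ => t ^ 2 / 2) atTop atTop :=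
    (tendsto_pow_atTop two_ne_zero).atTop_div_const (by norm_num)
  have h1 : Tendsto (fun t : ℝ => -(t ^ 2 / 2)) atTop atBot := tendsto_neg_atBot_iff.mpr h0
  have h2 := (Real.tendsto_exp_atBot.comp h1).const_mul ((Real.sqrt (2 * Real.pi))⁻¹)
  have he : gPDF = fun t => (Real.sqrt (2 * Real.pi))⁻¹ * Real.exp (-(t ^ 2 / 2)) :=
    funext fun t => by rw [gPDF]; ring_nf
  rw [he]
  simpa [Function.comp_def] using h2

lemma tendsto_id_gPDF_atTop : Tendsto (fun t : ℝ => t * gPDF t) atTop (𝓝 0) := by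
  have h := tendsto_rpow_abs_mul_exp_neg_mul_sq_cocompact (by norm_num : (0:ℝ) < 1/2) 1
  have h2 : Tendsto (fun t : ℝ => |t| * Real.exp (-(1/2) * t ^ 2)) atTop (𝓝 0) := by
    refine (h.mono_left ?_).congr fun t => by rw [Real.rpow_one]
    rw [cocompact_eq_atBot_atTop]; exact le_sup_right
  have h3 : Tendsto (fun t : ℝ => (Real.sqrt (2 * Real.pi))⁻¹ *
      (|t| * Real.exp (-(1/2) * t ^ 2))) atTop (𝓝 0) := by
    have := h2.const_mul ((Real.sqrt (2 * Real.pi))⁻¹); rwa [mul_zero] at this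
  refine squeeze_zero_norm (fun t => le_of_eq ?_) h3
  rw [Real.norm_eq_abs, abs_mul, gPDF_eq, abs_mul,
    abs_of_pos (Real.exp_pos _), abs_of_pos (by positivity : (0:ℝ) < (Real.sqrt (2 * Real.pi))⁻¹)]
  ring

lemma hasDerivAt_gPDF (t : ℝ) : HasDerivAt gPDF (-(t * gPDF t)) t := by
  exact (hasDerivAt_neg_gPDF t).neg.congr_of_eventuallyEq (Eventually.of_forall fun x => by simp)

lemma hasDerivAt_neg_id_gPDF (t : ℝ) :
    HasDerivAt (fun t : ℝ => -(t * gPDF t)) ((t ^ 2 - 1) * gPDF t) t := by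
  have h := ((hasDerivAt_id t).mul (hasDerivAt_gPDF t)).neg
  refine h.congr_deriv ?_
  simp only [id]
  ring

lemma integral_Ioi_gPDF (v : ℝ) : ∫ t in Ioi v, gPDF t = 1 - gCDF v := by
  have h := intervalIntegral.integral_Iic_add_Ioi (b := v) integrable_gPDF.integrableOn integrable_gPDF.integrableOn
  rw [integral_gPDF] at h
  rw [gCDF]
  linarith

lemma integral_Ioi_gPDF_pos (v : ℝ) : 0 < ∫ t in Ioi v, gPDF t := by
  rw [setIntegral_pos_iff_support_of_nonneg_ae
    (Eventually.of_forall fun t => (gPDF_pos t).le) integrable_gPDF.integrableOn]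
  have : Function.support gPDF ∩ Ioi v = Ioi v := by
    rw [inter_eq_right]
    exact fun t _ => (gPDF_pos t).ne'
  rw [this, Real.volume_Ioi]
  simp

lemma integral_Ioi_id_gPDF (v : ℝ) : ∫ t in Ioi v, t * gPDF t = gPDF v := by
  have h := integral_Ioi_of_hasDerivAt_of_tendsto' (a := v)
    (fun x _ => hasDerivAt_neg_gPDF x) integrable_id_gPDF.integrableOn
    (by simpa using tendsto_gPDF_atTop.neg)
  simpa using h

lemma integral_Ioi_sq_gPDF (v : ℝ) :
    ∫ t in Ioi v, t ^ 2 * gPDF t = v * gPDF v + ∫ t in Ioi v, gPDF t := by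
  have hint : IntegrableOn (fun t : ℝ => (t ^ 2 - 1) * gPDF t) (Ioi v) := by
    have := integrable_sq_gPDF.sub integrable_gPDF
    refine this.integrableOn.congr_fun (fun t _ => by simp [Pi.sub_apply]; ring) measurableSet_Ioi
  have h := integral_Ioi_of_hasDerivAt_of_tendsto' (a := v)
    (fun x _ => hasDerivAt_neg_id_gPDF x) hint
    (by simpa using tendsto_id_gPDF_atTop.neg)
  have h2 : ∫ t in Ioi v, (t ^ 2 - 1) * gPDF t
      = (∫ t in Ioi v, t ^ 2 * gPDF t) - ∫ t in Ioi v, gPDF t := by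
    rw [← integral_sub integrable_sq_gPDF.integrableOn integrable_gPDF.integrableOn]
    exact setIntegral_congr_fun measurableSet_Ioi (fun t _ => by ring)
  rw [h2] at h
  simp at h
  linarith

end MillsAux

open Topology in
/-- `λ(v)(λ(v) - v)` lies strictly between `0` and `1` for every real `v`. -/
theorem mills_mul_sub_mem_Ioo (v : ℝ) :
    0 < mills v ^ 2 - v * mills v ∧ mills v ^ 2 - v * mills v < 1 := by
  set S : ℝ := ∫ t in Ioi v, gPDF t with hSdef
  clear_value S
  have hS : 0 < S := hSdef ▸ integral_Ioi_gPDF_pos v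
  have hφ : 0 < gPDF v := gPDF_pos v
  have hmills : mills v = gPDF v / S := by rw [mills, ← integral_Ioi_gPDF, ← hSdef]
  set L : ℝ := mills v with hLdef
  have hLS : L * S = gPDF v := by rw [hmills]; field_simp
  -- first moment inequality: ∫ (t - v) gPDF > 0
  have hint1 : IntegrableOn (fun t : ℝ => (t - v) * gPDF t) (Ioi v) := by
    have := integrable_id_gPDF.sub (integrable_gPDF.const_mul v)
    exact (this.integrableOn.congr_fun (fun t _ => by simp [Pi.sub_apply]; ring)
      measurableSet_Ioi)
  have hJ' : 0 < ∫ t in Ioi v, (t - v) * gPDF t := by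
    rw [setIntegral_pos_iff_support_of_nonneg_ae ?_ hint1]
    · refine lt_of_lt_of_le ?_ (measure_mono (t := Function.support _ ∩ Ioi v)
        (fun t (ht : t ∈ Ioi v) => ⟨?_, ht⟩))
      · rw [Real.volume_Ioi]; simp
      · exact ne_of_gt (mul_pos (by simpa using sub_pos.mpr (mem_Ioi.mp ht)) (gPDF_pos t))
    · refine (ae_restrict_iff' measurableSet_Ioi).mpr (Eventually.of_forall fun t ht => ?_)
      exact mul_nonneg (by simpa using (sub_pos.mpr (mem_Ioi.mp ht)).le) (gPDF_pos t).le
  have hJ'eq : (∫ t in Ioi v, (t - v) * gPDF t) = gPDF v - v * S := by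
    have h := integral_sub integrable_id_gPDF.integrableOn
      ((integrable_gPDF.const_mul v).integrableOn (s := Ioi v))
    rw [show (∫ t in Ioi v, (t - v) * gPDF t)
        = ∫ t in Ioi v, (t * gPDF t - v * gPDF t) from
      setIntegral_congr_fun measurableSet_Ioi fun t _ => by ring, h,
      integral_Ioi_id_gPDF, integral_const_mul, hSdef]
  -- second moment inequality: ∫ (t - L)^2 gPDF > 0
  have hint2 : IntegrableOn (fun t : ℝ => (t - L) ^ 2 * gPDF t) (Ioi v) := by
    have := (integrable_sq_gPDF.sub (integrable_id_gPDF.const_mul (2 * L))).add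
      (integrable_gPDF.const_mul (L ^ 2))
    exact (this.integrableOn.congr_fun
      (fun t _ => by simp [Pi.add_apply, Pi.sub_apply]; ring) measurableSet_Ioi)
  have hJ : 0 < ∫ t in Ioi v, (t - L) ^ 2 * gPDF t := by
    rw [setIntegral_pos_iff_support_of_nonneg_ae
      (Eventually.of_forall fun t => mul_nonneg (sq_nonneg _) (gPDF_pos t).le) hint2]
    refine lt_of_lt_of_le ?_ (measure_mono (t := Function.support _ ∩ Ioi v)
      (s := Ioi (max v L)) (fun t ht => ⟨?_, mem_Ioi.mpr (lt_of_le_of_lt (le_max_left _ _) ht)⟩))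
    · rw [Real.volume_Ioi]; simp
    · have htL : t - L ≠ 0 := sub_ne_zero.mpr (ne_of_gt (lt_of_le_of_lt (le_max_right _ _) ht))
      exact ne_of_gt (mul_pos (sq_pos_of_ne_zero htL) (gPDF_pos t))
  have hJeq : (∫ t in Ioi v, (t - L) ^ 2 * gPDF t)
      = v * gPDF v + S - 2 * L * gPDF v + L ^ 2 * S := by
    have h1 : (∫ t in Ioi v, (t - L) ^ 2 * gPDF t)
        = ∫ t in Ioi v, (t ^ 2 * gPDF t - 2 * L * (t * gPDF t) + L ^ 2 * gPDF t) :=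
      setIntegral_congr_fun measurableSet_Ioi fun t _ => by ring
    have e1 : IntegrableOn (fun t : ℝ => 2 * L * (t * gPDF t)) (Ioi v) volume :=
      (integrable_id_gPDF.const_mul (2 * L)).integrableOn
    have e2 : IntegrableOn (fun t : ℝ => L ^ 2 * gPDF t) (Ioi v) volume :=
      (integrable_gPDF.const_mul (L ^ 2)).integrableOn
    have e3 : IntegrableOn (fun t : ℝ => t ^ 2 * gPDF t - 2 * L * (t * gPDF t)) (Ioi v) volume :=
      integrable_sq_gPDF.integrableOn.sub e1
    rw [h1, integral_add e3 e2, integral_sub integrable_sq_gPDF.integrableOn e1,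
      integral_const_mul, integral_const_mul, integral_Ioi_sq_gPDF, integral_Ioi_id_gPDF, ← hSdef]
  rw [hJeq] at hJ
  rw [hJ'eq] at hJ'
  constructor
  · have hLpos : 0 < L := by rw [hmills]; exact div_pos hφ hS
    have hrw : 0 < (L - v) * S := by
      have : (L - v) * S = gPDF v - v * S := by rw [← hLS]; ring
      rw [this]; exact hJ'
    nlinarith [mul_pos hLpos hrw, hS]
  · have hL2S : L ^ 2 * S = L * gPDF v := by rw [← hLS]; ring
    have hvLS : v * L * S = v * gPDF v := by rw [← hLS]; ring
    have key : 0 < S * (1 + v * L - L ^ 2) := by nlinarith [hJ, hL2S, hvLS]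
    nlinarith [key, hS]
end
end

section
/- Let X be a random vector in ℝ^K with E[‖X‖²] < ∞ and with E[X Xᵀ] nonsingular, and let W be any real-valued random variable on the same probability space (finite almost surely). Then there exists a constant v̄ > 0 such that the K×K matrix E[ 1_{|W| ≤ v̄} · X Xᵀ ] is nonsingular. -/
open MeasureTheory ProbabilityTheory Real Filter Set

noncomputable section

/-- If `E[X Xᵀ]` is nonsingular then for some threshold `v̄ > 0` the truncated second
moment matrix `E[1_{|W| ≤ v̄} X Xᵀ]` is also nonsingular. -/
theorem truncated_second_moment_nonsingular (K : ℕ) {Ω : Type*} [MeasurableSpace Ω]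
    (P : Measure Ω) [IsProbabilityMeasure P]
    (X : Ω → Fin K → ℝ) (hX : Measurable X)
    (hint : Integrable (fun ω => vnorm (X ω) ^ 2) P)
    (hns : (Matrix.of fun i j => ∫ ω, X ω i * X ω j ∂P).det ≠ 0)
    (W : Ω → ℝ) (hW : Measurable W) :
    ∃ vbar > (0 : ℝ),
      (Matrix.of fun i j =>
        ∫ ω, Set.indicator {ω | |W ω| ≤ vbar} (fun ω => X ω i * X ω j) ω ∂P).det ≠ 0 := by
  simp only [vnorm] at hint
  have hXm : ∀ i, Measurable fun ω => X ω i := fun i => (measurable_pi_apply i).comp hX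
  have hbound : ∀ i j ω, |X ω i * X ω j| ≤ Real.sqrt (∑ k, (X ω k) ^ 2) ^ 2 := by
    intro i j ω
    have h1 : ∀ k, |X ω k| ≤ Real.sqrt (∑ k, (X ω k) ^ 2) := by
      intro k
      rw [← Real.sqrt_sq_eq_abs]
      exact Real.sqrt_le_sqrt (Finset.single_le_sum (f := fun k => X ω k ^ 2) (fun k _ => sq_nonneg _) (Finset.mem_univ k))
    calc |X ω i * X ω j| = |X ω i| * |X ω j| := abs_mul _ _
      _ ≤ _ * _ := mul_le_mul (h1 i) (h1 j) (abs_nonneg _) ((abs_nonneg _).trans (h1 i))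
      _ = _ := (sq _).symm
  have hconv : ∀ i j, Tendsto
      (fun n : ℕ => ∫ ω, Set.indicator {ω | |W ω| ≤ (n : ℝ)} (fun ω => X ω i * X ω j) ω ∂P)
      atTop (nhds (∫ ω, X ω i * X ω j ∂P)) := by
    intro i j
    apply MeasureTheory.tendsto_integral_of_dominated_convergence
      (fun ω => Real.sqrt (∑ k, (X ω k) ^ 2) ^ 2)
    · intro n
      exact (((hXm i).mul (hXm j)).indicator
        (measurableSet_le hW.abs measurable_const)).aestronglyMeasurable
    · exact hint
    · intro n
      refine Filter.Eventually.of_forall fun ω => ?_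
      rw [Real.norm_eq_abs]
      refine le_trans ?_ (hbound i j ω)
      by_cases h : ω ∈ {ω | |W ω| ≤ (n : ℝ)}
      · rw [Set.indicator_of_mem h]
      · rw [Set.indicator_of_notMem h]; simp [abs_nonneg, mul_nonneg]
    · refine Filter.Eventually.of_forall fun ω => ?_
      have h : ∀ᶠ n : ℕ in atTop,
          Set.indicator {ω | |W ω| ≤ (n : ℝ)} (fun ω => X ω i * X ω j) ω = X ω i * X ω j := by
        obtain ⟨N, hN⟩ := exists_nat_ge |W ω|
        filter_upwards [eventually_ge_atTop N] with n hn
        exact Set.indicator_of_mem (show ω ∈ {ω | |W ω| ≤ (n : ℝ)} from hN.trans (Nat.cast_le.mpr hn)) (fun ω => X ω i * X ω j)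
      exact tendsto_const_nhds.congr' (h.mono fun n hn => hn.symm)
  have hmat : Tendsto
      (fun n : ℕ => (Matrix.of fun i j =>
        ∫ ω, Set.indicator {ω | |W ω| ≤ (n : ℝ)} (fun ω => X ω i * X ω j) ω ∂P))
      atTop (nhds (Matrix.of fun i j => ∫ ω, X ω i * X ω j ∂P)) := by
    refine tendsto_pi_nhds.mpr ?_
    intro i
    rw [tendsto_pi_nhds]
    intro j
    exact hconv i j
  have hdet := (Continuous.matrix_det continuous_id).continuousAt.tendsto.comp hmat
  have hev := hdet.eventually_ne hns
  obtain ⟨n, hn1, hn2⟩ := ((hev.and (eventually_ge_atTop 1)).exists)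
  exact ⟨(n : ℝ), by exact_mod_cast hn2, hn1⟩
end
end
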